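/- Let q be real with 0 < q < 1, and fix a, b, c, d, e ∈ ℂ with d, e ∉ {q^{−j} : j ∈ ℕ}. For all x, y, t ∈ ℂ with max{|xt|, |yt|} < 1, the series ∑_{n=0}^∞ φ_n^{(a,b,c;d,e)}(x,y|q) · t^n/(q;q)_n converges and equals (1/(xt;q)_∞) · ∑_{n=0}^∞ ((a,b,c;q)_n/((q;q)_n (d,e;q)_n)) (yt)^n. -/

import Mathlib

noncomputable def qPoch (q a : ℂ) (n : ℕ) : ℂ := ∏ j ∈ Finset.range n, (1 - a * q ^ j)

noncomputable def qPochInf (q a : ℂ) : ℂ := ∏' j : ℕ, (1 - a * q ^ j)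

noncomputable def qBinom (q : ℂ) (n k : ℕ) : ℂ := qPoch q q n / (qPoch q q k * qPoch q q (n - k))

/-- Generalized Al-Salam--Carlitz polynomial φ_n^{(a,b,c;d,e)}(x,y|q). -/
noncomputable def phiACP (q a b c d e x y : ℂ) (n : ℕ) : ℂ :=
  ∑ k ∈ Finset.range (n + 1),
    qBinom q n k * (qPoch q a k * qPoch q b k * qPoch q c k) / (qPoch q d k * qPoch q e k) *
      x ^ (n - k) * y ^ k

/-- Second generalized Al-Salam--Carlitz polynomial ψ_n^{(a,b,c;d,e)}(x,y|q). -/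
noncomputable def psiACP (q a b c d e x y : ℂ) (n : ℕ) : ℂ :=
  ∑ k ∈ Finset.range (n + 1),
    qBinom q n k * (-1) ^ k * q ^ ((k : ℤ) * ((k : ℤ) - (n : ℤ))) *
      (qPoch q a k * qPoch q b k * qPoch q c k) / (qPoch q d k * qPoch q e k) *
      x ^ (n - k) * y ^ k

/-!
The generating function is the Cauchy product of `∑ (a,b,c;q)ₖ / (q,d,e;q)ₖ (yt)ᵏ` with Euler's
series `∑ (xt)ᵐ / (q;q)ₘ`, because `[n,k]_q / (q;q)ₙ = 1 / ((q;q)ₖ (q;q)ₙ₋ₖ)`; both series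
converge absolutely by the ratio test. Euler's series sums to `1 / (xt;q)_∞`: its sum `e_q`
satisfies `(1 - u) e_q(u) = e_q(qu)`, hence `(w;q)_N e_q(w) = e_q(qᴺ w)`, and the right-hand side
tends to `e_q(0) = 1` by dominated convergence.
-/

open Finset Filter Topology

@[simp]
lemma qPoch_zero (q a : ℂ) : qPoch q a 0 = 1 := rfl

lemma qPoch_succ (q a : ℂ) (n : ℕ) : qPoch q a (n + 1) = qPoch q a n * (1 - a * q ^ n) :=
  prod_range_succ _ _

lemma norm_pow_mul_le {q : ℂ} (hq : ‖q‖ ≤ 1) (n : ℕ) (w : ℂ) : ‖q ^ n * w‖ ≤ ‖w‖ := by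
  rw [norm_mul, norm_pow]
  exact mul_le_of_le_one_left (norm_nonneg w) (pow_le_one₀ (norm_nonneg q) hq)

lemma one_sub_mul_pow_ne_zero {q a : ℂ} (hq : ‖q‖ ≤ 1) (ha : ‖a‖ < 1) (n : ℕ) :
    1 - a * q ^ n ≠ 0 := by
  intro h
  have h1 : q ^ n * a = 1 := by linear_combination -h
  simpa [h1] using (norm_pow_mul_le hq n a).trans_lt ha

lemma qPoch_ne_zero_of_norm_lt_one {q a : ℂ} (hq : ‖q‖ ≤ 1) (ha : ‖a‖ < 1) (n : ℕ) :
    qPoch q a n ≠ 0 :=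
  prod_ne_zero_iff.mpr fun j _ => one_sub_mul_pow_ne_zero hq ha j

lemma tendsto_one_sub_mul_pow {q : ℂ} (hq : ‖q‖ < 1) (a : ℂ) :
    Tendsto (fun n : ℕ => 1 - a * q ^ n) atTop (𝓝 1) := by
  simpa using tendsto_const_nhds.sub
    ((tendsto_pow_atTop_nhds_zero_of_norm_lt_one hq).const_mul a)

lemma summable_norm_of_ratio_tendsto {R : Type*} [SeminormedRing R] {f r : ℕ → R} {ρ : R}
    (hf : ∀ n, f (n + 1) = r n * f n) (hr : Tendsto r atTop (𝓝 ρ)) (hρ : ‖ρ‖ < 1) :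
    Summable fun n => ‖f n‖ := by
  obtain ⟨l, hρl, hl1⟩ := exists_between hρ
  refine summable_of_ratio_norm_eventually_le hl1 ?_
  filter_upwards [hr.norm.eventually (gt_mem_nhds hρl)] with n hn
  rw [norm_norm, norm_norm, hf]
  exact (norm_mul_le _ _).trans (mul_le_mul_of_nonneg_right hn.le (norm_nonneg _))

section Euler

variable {q : ℂ}

lemma summable_norm_pow_div_qPoch (hq : ‖q‖ < 1) {w : ℂ} (hw : ‖w‖ < 1) :
    Summable fun n : ℕ => ‖w ^ n / qPoch q q n‖ := by
  refine summable_norm_of_ratio_tendsto (r := fun n => w * (1 - q * q ^ n)⁻¹) (fun n => ?_)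
    (by simpa using (tendsto_one_sub_mul_pow hq q).inv₀ one_ne_zero |>.const_mul w)
    hw
  have hQ := qPoch_ne_zero_of_norm_lt_one hq.le hq n
  have hfac := one_sub_mul_pow_ne_zero hq.le hq n
  rw [qPoch_succ, pow_succ]
  field_simp

noncomputable def qExp (q w : ℂ) : ℂ := ∑' n : ℕ, w ^ n / qPoch q q n

lemma one_sub_mul_qExp (hq : ‖q‖ < 1) {u : ℂ} (hu : ‖u‖ < 1) :
    (1 - u) * qExp q u = qExp q (q * u) := by
  have hs : HasSum (fun n : ℕ => u ^ n / qPoch q q n) (qExp q u) :=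
    (summable_norm_pow_div_qPoch hq hu).of_norm.hasSum
  have hterm : ∀ n : ℕ, (q * u) ^ (n + 1) / qPoch q q (n + 1) =
      u ^ (n + 1) / qPoch q q (n + 1) - u * (u ^ n / qPoch q q n) := fun n => by
    have hQ := qPoch_ne_zero_of_norm_lt_one hq.le hq n
    have hfac := one_sub_mul_pow_ne_zero hq.le hq n
    rw [qPoch_succ]
    field_simp
    ring
  have hval : (1 - u) * qExp q u - ∑ i ∈ range 1, (q * u) ^ i / qPoch q q i =
      qExp q u - ∑ i ∈ range 1, u ^ i / qPoch q q i - u * qExp q u := by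
    simp only [sum_range_one, pow_zero, qPoch_zero, div_one]
    ring
  have hs' : HasSum (fun n : ℕ => (q * u) ^ n / qPoch q q n) ((1 - u) * qExp q u) := by
    rw [← hasSum_nat_add_iff' 1, hval]
    simpa only [hterm] using ((hasSum_nat_add_iff' 1).mpr hs).sub (hs.mul_left u)
  exact hs'.tsum_eq.symm

lemma qPoch_mul_qExp (hq : ‖q‖ < 1) {w : ℂ} (hw : ‖w‖ < 1) :
    ∀ N : ℕ, qPoch q w N * qExp q w = qExp q (q ^ N * w)
  | 0 => by simp
  | N + 1 => by
    rw [qPoch_succ, pow_succ', mul_assoc q,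
      ← one_sub_mul_qExp hq ((norm_pow_mul_le hq.le N w).trans_lt hw),
      ← qPoch_mul_qExp hq hw N]
    ring

lemma tendsto_qExp_pow_mul (hq : ‖q‖ < 1) {w : ℂ} (hw : ‖w‖ < 1) :
    Tendsto (fun N : ℕ => qExp q (q ^ N * w)) atTop (𝓝 1) := by
  have hzero : ∑' n : ℕ, (0 : ℂ) ^ n / qPoch q q n = 1 := by
    rw [tsum_eq_single 0 fun n hn => by simp [hn]]
    simp
  rw [← hzero]
  refine tendsto_tsum_of_dominated_convergence (summable_norm_pow_div_qPoch hq hw)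
    (fun n => ?_) (Eventually.of_forall fun N n => ?_)
  · simpa using (((tendsto_pow_atTop_nhds_zero_of_norm_lt_one hq).mul_const w).pow n).div_const
      (qPoch q q n)
  · rw [norm_div, norm_div, norm_pow, norm_pow]
    gcongr
    exact norm_pow_mul_le hq.le N w

lemma multipliable_one_sub_mul_pow (hq : ‖q‖ < 1) (w : ℂ) :
    Multipliable fun j : ℕ => 1 - w * q ^ j := by
  simpa [sub_eq_add_neg] using multipliable_one_add_of_summable (f := fun j : ℕ => -(w * q ^ j))
    (by simpa using (summable_geometric_of_lt_one (norm_nonneg q) hq).mul_left ‖w‖)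

theorem hasSum_pow_div_qPoch (hq : ‖q‖ < 1) {w : ℂ} (hw : ‖w‖ < 1) :
    HasSum (fun n : ℕ => w ^ n / qPoch q q n) (qPochInf q w)⁻¹ := by
  have hprod : Tendsto (qPoch q w) atTop (𝓝 (qPochInf q w)) :=
    (multipliable_one_sub_mul_pow hq w).hasProd.tendsto_prod_nat
  have hmul : qPochInf q w * qExp q w = 1 :=
    tendsto_nhds_unique (hprod.mul_const _)
      (by simpa only [qPoch_mul_qExp hq hw] using tendsto_qExp_pow_mul hq hw)
  rw [inv_eq_of_mul_eq_one_right hmul]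
  exact (summable_norm_pow_div_qPoch hq hw).of_norm.hasSum

end Euler

lemma summable_norm_qPoch_div_qPoch_mul_pow {q : ℂ} (hq : ‖q‖ < 1) (a b c d e : ℂ) {z : ℂ}
    (hz : ‖z‖ < 1) :
    Summable fun n : ℕ => ‖(qPoch q a n * qPoch q b n * qPoch q c n) /
      (qPoch q q n * qPoch q d n * qPoch q e n) * z ^ n‖ := by
  refine summable_norm_of_ratio_tendsto
    (r := fun n => (1 - a * q ^ n) * (1 - b * q ^ n) * (1 - c * q ^ n) /
      ((1 - q * q ^ n) * (1 - d * q ^ n) * (1 - e * q ^ n)) * z) (fun n => ?_) ?_ hz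
  · simp only [qPoch_succ, pow_succ, div_eq_mul_inv, mul_inv]
    ring
  · have hlim := tendsto_one_sub_mul_pow hq
    simpa using ((((hlim a).mul (hlim b)).mul (hlim c)).div
      (((hlim q).mul (hlim d)).mul (hlim e))
      (by norm_num)).mul_const z

lemma phiACP_mul_pow_div_qPoch {q : ℂ} (a b c d e x y t : ℂ) {n : ℕ} (hn : qPoch q q n ≠ 0) :
    phiACP q a b c d e x y n * t ^ n / qPoch q q n =
      ∑ k ∈ range (n + 1), (qPoch q a k * qPoch q b k * qPoch q c k) /
        (qPoch q q k * qPoch q d k * qPoch q e k) * (y * t) ^ k *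
          ((x * t) ^ (n - k) / qPoch q q (n - k)) := by
  rw [phiACP, sum_mul, sum_div]
  refine sum_congr rfl fun k hk => ?_
  rw [qBinom, mul_pow, mul_pow, ← pow_mul_pow_sub t (mem_range_succ_iff.mp hk)]
  field_simp

theorem stmt4_general (q : ℝ) (hq0 : 0 < q) (hq1 : q < 1)
    (a b c d e : ℂ)
    (x y t : ℂ) (hxt : ‖x * t‖ < 1) (hyt : ‖y * t‖ < 1) :
    HasSum (fun n : ℕ => phiACP (q : ℂ) a b c d e x y n * t ^ n / qPoch (q : ℂ) (q : ℂ) n)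
      ((qPochInf (q : ℂ) (x * t))⁻¹ *
        ∑' n : ℕ, (qPoch (q : ℂ) a n * qPoch (q : ℂ) b n * qPoch (q : ℂ) c n) /
          (qPoch (q : ℂ) (q : ℂ) n * qPoch (q : ℂ) d n * qPoch (q : ℂ) e n) * (y * t) ^ n) := by
  have hq : ‖(q : ℂ)‖ < 1 := by
    rwa [Complex.norm_real, Real.norm_of_nonneg hq0.le]
  have hcauchy := hasSum_sum_range_mul_of_summable_norm
    (summable_norm_qPoch_div_qPoch_mul_pow hq a b c d e hyt)
    (summable_norm_pow_div_qPoch hq hxt)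
  rw [(hasSum_pow_div_qPoch hq hxt).tsum_eq, mul_comm _ (qPochInf _ _)⁻¹] at hcauchy
  simpa only [phiACP_mul_pow_div_qPoch a b c d e x y t (qPoch_ne_zero_of_norm_lt_one hq.le hq _)]
    using hcauchy

/-- generating function for φ_n^{(a,b,c;d,e)}(x,y|q). -/
theorem stmt4 (q : ℝ) (hq0 : 0 < q) (hq1 : q < 1)
    (a b c d e : ℂ)
    (hd : ∀ j : ℕ, d ≠ (((q : ℂ)) ^ j)⁻¹) (he : ∀ j : ℕ, e ≠ (((q : ℂ)) ^ j)⁻¹)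
    (x y t : ℂ) (hxt : ‖x * t‖ < 1) (hyt : ‖y * t‖ < 1) :
    HasSum (fun n : ℕ => phiACP (q : ℂ) a b c d e x y n * t ^ n / qPoch (q : ℂ) (q : ℂ) n)
      ((qPochInf (q : ℂ) (x * t))⁻¹ *
        ∑' n : ℕ, (qPoch (q : ℂ) a n * qPoch (q : ℂ) b n * qPoch (q : ℂ) c n) /
          (qPoch (q : ℂ) (q : ℂ) n * qPoch (q : ℂ) d n * qPoch (q : ℂ) e n) * (y * t) ^ n) :=
  stmt4_general q hq0 hq1 a b c d e x y t hxt hyt
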